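/- arXiv:2206.00714 — 2 statements merged into one kernel-verified Lean document; each statement's English description precedes it below -/
import Mathlib

section
/- Let (X,d) be a compact metric space, f_{1,∞} an NDS on X, μ a Borel probability measure on X, Z ⊆ X, and s ∈ ℝ. If h̲_μ(f_{1,∞},x) ≥ s for every x ∈ Z and μ(Z) > 0, then h^B_{top}(f_{1,∞},Z) ≥ s and h^{WB}_{top}(f_{1,∞},Z) ≥ s. -/
open Filter MeasureTheory Set ENNReal

noncomputable section

variable {X : Type} [MetricSpace X]

/-- The iterate `f_1^n = f_n ∘ ⋯ ∘ f_1` of the NDS `f`, where `f 0` is the first map `f_1`. -/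
def nIter (f : ℕ → X → X) : ℕ → X → X
  | 0 => id
  | n + 1 => f n ∘ nIter f n

/-- The Bowen (dynamical) ball `B_n(x, ε)` for the Bowen metric
`d_n(x,y) = max_{0 ≤ j < n} d(f_1^j x, f_1^j y)`. -/
def bowenBall (f : ℕ → X → X) (n : ℕ) (x : X) (ε : ℝ) : Set X :=
  {y | ∀ j < n, dist (nIter f j x) (nIter f j y) < ε}

/-- The Birkhoff sum `S_{1,n} ψ (x) = ∑_{j=0}^{n-1} ψ(f_1^j x)`. -/
def birkSum (f : ℕ → X → X) (ψ : X → ℝ) (n : ℕ) (x : X) : ℝ :=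
  ∑ j ∈ Finset.range n, ψ (nIter f j x)

/-- `S_{1,n} ψ (x, ε) = sup_{y ∈ B_n(x,ε)} S_{1,n} ψ (y)`. -/
def birkSupBall (f : ℕ → X → X) (ψ : X → ℝ) (n : ℕ) (x : X) (ε : ℝ) : ℝ :=
  sSup (birkSum f ψ n '' bowenBall f n x ε)

/-- `M(n, α, ε, Z, ψ)`: infimum of `∑_i exp(-α n_i + S_{1,n_i}ψ(x_i, ε))` over all finite or
countable covers `Z ⊆ ⋃_i B_{n_i}(x_i, ε)` with `n_i ≥ n`. -/
def Mpre (f : ℕ → X → X) (ψ : X → ℝ) (Z : Set X) (n : ℕ) (α ε : ℝ) : ℝ≥0∞ :=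
  sInf { S : ℝ≥0∞ | ∃ (u : Set ℕ) (c : ℕ → X) (m : ℕ → ℕ),
    (∀ i ∈ u, n ≤ m i) ∧ (Z ⊆ ⋃ i ∈ u, bowenBall f (m i) (c i) ε) ∧
    S = ∑' i : u, ENNReal.ofReal (Real.exp (-α * (m i : ℝ) + birkSupBall f ψ (m i) (c i) ε)) }

/-- `𝓜(n, α, ε, Z, ψ)`: as `Mpre` but with the Birkhoff sums evaluated at the centers. -/
def MpreC (f : ℕ → X → X) (ψ : X → ℝ) (Z : Set X) (n : ℕ) (α ε : ℝ) : ℝ≥0∞ :=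
  sInf { S : ℝ≥0∞ | ∃ (u : Set ℕ) (c : ℕ → X) (m : ℕ → ℕ),
    (∀ i ∈ u, n ≤ m i) ∧ (Z ⊆ ⋃ i ∈ u, bowenBall f (m i) (c i) ε) ∧
    S = ∑' i : u, ENNReal.ofReal (Real.exp (-α * (m i : ℝ) + birkSum f ψ (m i) (c i))) }

/-- `M(α, ε, Z, ψ) = lim_{n→∞} M(n, α, ε, Z, ψ)`; the quantity is nondecreasing in `n`,
so the limit is the supremum. -/
def Mlim (f : ℕ → X → X) (ψ : X → ℝ) (Z : Set X) (α ε : ℝ) : ℝ≥0∞ :=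
  ⨆ n : ℕ, Mpre f ψ Z n α ε

/-- `𝓜(α, ε, Z, ψ) = lim_{n→∞} 𝓜(n, α, ε, Z, ψ)`. -/
def MlimC (f : ℕ → X → X) (ψ : X → ℝ) (Z : Set X) (α ε : ℝ) : ℝ≥0∞ :=
  ⨆ n : ℕ, MpreC f ψ Z n α ε

/-- `P^B(ε, Z, ψ) = inf {α : M(α, ε, Z, ψ) = 0}`, as an extended real. -/
def PBeps (f : ℕ → X → X) (ψ : X → ℝ) (Z : Set X) (ε : ℝ) : EReal :=
  sInf (Real.toEReal '' {α : ℝ | Mlim f ψ Z α ε = 0})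

/-- `𝒫^B(ε, Z, ψ) = inf {α : 𝓜(α, ε, Z, ψ) = 0}`. -/
def PBCeps (f : ℕ → X → X) (ψ : X → ℝ) (Z : Set X) (ε : ℝ) : EReal :=
  sInf (Real.toEReal '' {α : ℝ | MlimC f ψ Z α ε = 0})

/-- The Pesin–Pitskel topological pressure `P^B_{f_{1,∞}}(Z, ψ) = lim_{ε→0} P^B(ε, Z, ψ)`. -/
def PB (f : ℕ → X → X) (ψ : X → ℝ) (Z : Set X) : EReal :=
  limUnder (nhdsWithin 0 (Ioi 0)) fun ε : ℝ => PBeps f ψ Z ε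

/-- `W(n, α, ε, Z, ψ)`: the weighted analogue of `Mpre`. -/
def Wpre (f : ℕ → X → X) (ψ : X → ℝ) (Z : Set X) (n : ℕ) (α ε : ℝ) : ℝ≥0∞ :=
  sInf { S : ℝ≥0∞ | ∃ (u : Set ℕ) (cx : ℕ → X) (m : ℕ → ℕ) (c : ℕ → ℝ),
    (∀ i ∈ u, 0 < c i) ∧ (∀ i ∈ u, n ≤ m i) ∧
    (∀ z ∈ Z, 1 ≤ ∑' i : u,
      (bowenBall f (m i) (cx i) ε).indicator (fun _ => ENNReal.ofReal (c i)) z) ∧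
    S = ∑' i : u, ENNReal.ofReal (c i) *
      ENNReal.ofReal (Real.exp (-α * (m i : ℝ) + birkSupBall f ψ (m i) (cx i) ε)) }

/-- `W(α, ε, Z, ψ) = lim_{n→∞} W(n, α, ε, Z, ψ)`. -/
def Wlim (f : ℕ → X → X) (ψ : X → ℝ) (Z : Set X) (α ε : ℝ) : ℝ≥0∞ :=
  ⨆ n : ℕ, Wpre f ψ Z n α ε

/-- `P^W(ε, Z, ψ)`: the critical value of `α` at which `W(α, ε, Z, ψ)` jumps from `∞` to `0`. -/
def PWeps (f : ℕ → X → X) (ψ : X → ℝ) (Z : Set X) (ε : ℝ) : EReal :=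
  sInf (Real.toEReal '' {α : ℝ | Wlim f ψ Z α ε = 0})

/-- The weighted topological pressure `P^W_{f_{1,∞}}(Z, ψ) = lim_{ε→0} P^W(ε, Z, ψ)`. -/
def PW (f : ℕ → X → X) (ψ : X → ℝ) (Z : Set X) : EReal :=
  limUnder (nhdsWithin 0 (Ioi 0)) fun ε : ℝ => PWeps f ψ Z ε

/-- Bowen topological entropy `h^B_top(f_{1,∞}, Z)`, i.e. pressure of the zero potential. -/
def hBtop (f : ℕ → X → X) (Z : Set X) : EReal := PB f (fun _ => 0) Z

/-- Weighted Bowen topological entropy `h^{WB}_top(f_{1,∞}, Z)`. -/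
def hWBtop (f : ℕ → X → X) (Z : Set X) : EReal := PW f (fun _ => 0) Z

/-- `EReal → ℝ≥0∞`, sending `⊤` to `⊤` and everything negative to `0`. -/
def ERealToENNReal (x : EReal) : ℝ≥0∞ := if x = ⊤ then ⊤ else ENNReal.ofReal x.toReal

variable [MeasurableSpace X]

/-- The measure-theoretic local pressure
`P_μ(x,ψ) = lim_{ε→0} liminf_{n→∞} (-log μ(B_n(x,ε)) + S_{1,n}ψ(x))/n`. -/
def Ploc (f : ℕ → X → X) (μ : Measure X) (ψ : X → ℝ) (x : X) : EReal :=
  limUnder (nhdsWithin 0 (Ioi 0)) fun ε : ℝ =>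
    Filter.atTop.liminf fun n : ℕ =>
      (((n : ℝ)⁻¹ : ℝ) : EReal) *
        (-(ENNReal.log (μ (bowenBall f n x ε))) + ((birkSum f ψ n x : ℝ) : EReal))

/-- The integral of an extended-real-valued function: the difference of the lower integrals of
its positive and negative parts. -/
def ERealIntegral (μ : Measure X) (g : X → EReal) : EReal :=
  ((∫⁻ x, ERealToENNReal (g x) ∂μ : ℝ≥0∞) : EReal)
    - ((∫⁻ x, ERealToENNReal (-(g x)) ∂μ : ℝ≥0∞) : EReal)

/-- The measure-theoretic pressure `P_μ(X, ψ) = ∫ P_μ(x, ψ) dμ(x)`. -/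
def Pmeas (f : ℕ → X → X) (μ : Measure X) (ψ : X → ℝ) : EReal :=
  ERealIntegral μ (Ploc f μ ψ)

/-- The measure-theoretic local lower entropy `h̲_μ(f_{1,∞}, x)`. -/
def hloc (f : ℕ → X → X) (μ : Measure X) (x : X) : EReal := Ploc f μ (fun _ => 0) x

/-- The measure-theoretic lower entropy `h̲_μ(f_{1,∞}) = ∫ h̲_μ(f_{1,∞}, x) dμ(x)`. -/
def hmeas (f : ℕ → X → X) (μ : Measure X) : EReal := Pmeas f μ (fun _ => 0)


end

/-!
The measure `μ` is a mass distribution for `Z`. For `α < s`, every point of `Z` lies in some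
`Z_k`, the set of `x ∈ Z` with `μ(B_n(x, 1/(k+1))) ≤ e^{-αn}` for all `n ≥ k`, so some `Z_k` has
positive outer measure. A Bowen ball `B_m(c, ε)` with `2ε = 1/(k+1)` and `m ≥ k` that meets `Z_k`
lies in a ball `B_m(y, 1/(k+1))` centred in `Z_k`, so `μ(B_m(c, ε) ∩ Z_k) ≤ e^{-αm}`. Integrating
a weighted cover of `Z` against `μ` then gives `μ(Z_k) ≤ W(k, β, ε, Z)` for every `β < α`, hence
`h^{WB}_top(Z) ≥ α`; and `h^B_top ≥ h^{WB}_top` because every cover is a weighted cover.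
-/

open Topology

section Bowen

variable {X : Type} [MetricSpace X] {f : ℕ → X → X}

lemma bowenBall_mono {n : ℕ} {x : X} {ε ε' : ℝ} (h : ε ≤ ε') :
    bowenBall f n x ε ⊆ bowenBall f n x ε' :=
  fun _ hy j hj => (hy j hj).trans_le h

lemma bowenBall_subset_bowenBall_of_mem {n : ℕ} {x y : X} {ε : ℝ}
    (hy : y ∈ bowenBall f n x ε) : bowenBall f n x ε ⊆ bowenBall f n y (ε + ε) := by
  intro z hz j hj
  calc dist (nIter f j y) (nIter f j z)
      ≤ dist (nIter f j x) (nIter f j y) + dist (nIter f j x) (nIter f j z) :=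
        dist_triangle_left _ _ _
    _ < ε + ε := add_lt_add (hy j hj) (hz j hj)

lemma birkSupBall_zero (n : ℕ) (x : X) (ε : ℝ) : birkSupBall f (fun _ => 0) n x ε = 0 := by
  have hS : ∀ t ∈ birkSum f (fun _ => 0) n '' bowenBall f n x ε, t = 0 := by
    rintro _ ⟨y, -, rfl⟩
    simp [birkSum]
  exact le_antisymm (Real.sSup_nonpos fun t ht => (hS t ht).le)
    (Real.sSup_nonneg fun t ht => (hS t ht).ge)

lemma limUnder_nhdsGT_zero_eq_sSup {g : ℝ → EReal} (hg : Antitone g) :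
    limUnder (𝓝[>] 0) g = sSup (g '' Ioi 0) :=
  (hg.tendsto_nhdsGT 0).limUnder_eq

lemma sInf_zeroSet_mono {F G : ℝ → ℝ≥0∞} (h : ∀ α, G α ≤ F α) :
    sInf (Real.toEReal '' {α | G α = 0}) ≤ sInf (Real.toEReal '' {α | F α = 0}) :=
  sInf_le_sInf (image_mono fun α hα => le_antisymm (hα ▸ h α) bot_le)

lemma Mpre_zero_antitone (Z : Set X) (n : ℕ) (α : ℝ) :
    Antitone (Mpre f (fun _ => 0) Z n α) := by
  intro ε ε' hε
  refine sInf_le_sInf ?_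
  rintro _ ⟨u, c, m, hm, hcov, rfl⟩
  exact ⟨u, c, m, hm, hcov.trans (iUnion₂_mono fun i _ => bowenBall_mono hε),
    by simp only [birkSupBall_zero]⟩

lemma Wpre_zero_antitone (Z : Set X) (n : ℕ) (α : ℝ) :
    Antitone (Wpre f (fun _ => 0) Z n α) := by
  intro ε ε' hε
  refine sInf_le_sInf ?_
  rintro _ ⟨u, cx, m, c, hc, hm, hcov, rfl⟩
  refine ⟨u, cx, m, c, hc, hm, fun z hz => (hcov z hz).trans ?_, by simp only [birkSupBall_zero]⟩
  exact ENNReal.tsum_le_tsum fun i =>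
    indicator_le_indicator_of_subset (bowenBall_mono hε) (fun _ => zero_le) z

lemma Wpre_le_Mpre (ψ : X → ℝ) (Z : Set X) (n : ℕ) (α ε : ℝ) :
    Wpre f ψ Z n α ε ≤ Mpre f ψ Z n α ε := by
  refine sInf_le_sInf ?_
  rintro _ ⟨u, c, m, hm, hcov, rfl⟩
  refine ⟨u, c, m, fun _ => 1, fun _ _ => one_pos, hm, fun z hz => ?_, by simp⟩
  obtain ⟨i, hi, hzi⟩ := mem_iUnion₂.1 (hcov hz)
  calc (1 : ℝ≥0∞) = (bowenBall f (m i) (c i) ε).indicator (fun _ => ENNReal.ofReal 1) z := by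
        rw [indicator_of_mem hzi, ENNReal.ofReal_one]
    _ ≤ _ := ENNReal.le_tsum (⟨i, hi⟩ : u)

lemma PBeps_zero_antitone (Z : Set X) : Antitone (PBeps f (fun _ => 0) Z) :=
  fun _ _ hε => sInf_zeroSet_mono fun _ => iSup_mono fun n => Mpre_zero_antitone Z n _ hε

lemma PWeps_zero_antitone (Z : Set X) : Antitone (PWeps f (fun _ => 0) Z) :=
  fun _ _ hε => sInf_zeroSet_mono fun _ => iSup_mono fun n => Wpre_zero_antitone Z n _ hε

lemma hWBtop_le_hBtop (f : ℕ → X → X) (Z : Set X) : hWBtop f Z ≤ hBtop f Z := by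
  rw [hWBtop, hBtop, PW, PB, limUnder_nhdsGT_zero_eq_sSup (PWeps_zero_antitone Z),
    limUnder_nhdsGT_zero_eq_sSup (PBeps_zero_antitone Z)]
  refine sSup_le ?_
  rintro _ ⟨ε, hε, rfl⟩
  exact (sInf_zeroSet_mono fun _ => iSup_mono fun n => Wpre_le_Mpre _ Z n _ ε).trans
    (le_sSup ⟨ε, hε, rfl⟩)

end Bowen

section MassDistribution

variable {X : Type} [MetricSpace X] [MeasurableSpace X] {f : ℕ → X → X}

/-- The mass distribution principle for weighted covers. -/
lemma measure_le_Wpre_zero {μ : Measure X} {Z E : Set X} {n : ℕ} {β ε : ℝ} (hEZ : E ⊆ Z)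
    (hball : ∀ m ≥ n, ∀ c, μ (bowenBall f m c ε ∩ E) ≤ ENNReal.ofReal (Real.exp (-β * m))) :
    μ E ≤ Wpre f (fun _ => 0) Z n β ε := by
  refine le_sInf ?_
  rintro _ ⟨u, cx, m, c, -, hm, hcov, rfl⟩
  -- Bowen balls need not be measurable: integrate over measurable hulls instead.
  set B : ℕ → Set X := fun i => toMeasurable μ (bowenBall f (m i) (cx i) ε ∩ E)
  set g : u → X → ℝ≥0∞ := fun i => (B i).indicator fun _ => ENNReal.ofReal (c i)
  have hg : ∀ i, Measurable (g i) := fun i =>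
    measurable_const.indicator (measurableSet_toMeasurable _ _)
  have hgE : E ⊆ {z | 1 ≤ ∑' i, g i z} := fun z hz =>
    (hcov z (hEZ hz)).trans <| ENNReal.tsum_le_tsum fun i => by
      by_cases hzB : z ∈ bowenBall f (m i) (cx i) ε
      · rw [indicator_of_mem hzB]
        exact (indicator_of_mem (subset_toMeasurable μ _ (mem_inter hzB hz))
          fun _ => ENNReal.ofReal (c i)).ge
      · rw [indicator_of_notMem hzB]
        exact zero_le
  calc μ E ≤ μ {z | 1 ≤ ∑' i, g i z} := measure_mono hgE
    _ ≤ ∫⁻ z, ∑' i, g i z ∂μ := by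
        simpa using mul_meas_ge_le_lintegral₀ (Measurable.tsum hg).aemeasurable 1
    _ = ∑' i : u, ENNReal.ofReal (c i) * μ (bowenBall f (m i) (cx i) ε ∩ E) := by
        rw [lintegral_tsum fun i => (hg i).aemeasurable]
        refine tsum_congr fun i => ?_
        rw [lintegral_indicator_const (measurableSet_toMeasurable _ _), measure_toMeasurable]
    _ ≤ _ := by
        simp only [birkSupBall_zero, add_zero]
        exact ENNReal.tsum_le_tsum fun i => by gcongr; exact hball _ (hm i i.2) _

lemma le_PWeps_of_measure_le_Wpre {ψ : X → ℝ} {μ : Measure X} {Z E : Set X} {n : ℕ} {α ε : ℝ}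
    (hE : 0 < μ E) (h : ∀ β < α, μ E ≤ Wpre f ψ Z n β ε) : (α : EReal) ≤ PWeps f ψ Z ε := by
  refine le_sInf ?_
  rintro _ ⟨β, hβ, rfl⟩
  by_contra hlt
  have hβE : μ E ≤ Wlim f ψ Z β ε := (h β (EReal.coe_lt_coe_iff.1 (not_le.1 hlt))).trans
    (le_iSup (fun n => Wpre f ψ Z n β ε) n)
  exact hE.ne' (le_antisymm (hβ ▸ hβE) bot_le)

lemma le_ofReal_exp_of_lt_inv_mul_neg_log {a : ℝ≥0∞} {α t : ℝ} (ht : 0 < t)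
    (h : (α : EReal) < ((t⁻¹ : ℝ) : EReal) * -ENNReal.log a) :
    a ≤ ENNReal.ofReal (Real.exp (-α * t)) := by
  rw [EReal.coe_inv, ← EReal.div_eq_inv_mul,
    EReal.lt_div_iff (EReal.coe_pos.2 ht) (EReal.coe_ne_top t), ← EReal.coe_mul,
    EReal.lt_neg_comm] at h
  rw [← ENNReal.log_le_log_iff, ENNReal.log_ofReal_of_pos (Real.exp_pos _), Real.log_exp,
    neg_mul, EReal.coe_neg]
  exact h.le

lemma hloc_eq_sSup (f : ℕ → X → X) (μ : Measure X) (x : X) :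
    hloc f μ x = sSup ((fun ε : ℝ => atTop.liminf fun n : ℕ =>
      (((n : ℝ)⁻¹ : ℝ) : EReal) * -ENNReal.log (μ (bowenBall f n x ε))) '' Ioi 0) := by
  have hanti : Antitone fun ε : ℝ => atTop.liminf fun n : ℕ =>
      (((n : ℝ)⁻¹ : ℝ) : EReal) * -ENNReal.log (μ (bowenBall f n x ε)) := by
    intro ε ε' hε
    refine liminf_le_liminf (Eventually.of_forall fun n => ?_)
    gcongr
    exact EReal.neg_le_neg_iff.2 (ENNReal.log_le_log (measure_mono (bowenBall_mono hε)))
  simp only [hloc, Ploc, birkSum, Finset.sum_const_zero, EReal.coe_zero, add_zero]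
  exact limUnder_nhdsGT_zero_eq_sSup hanti

lemma exists_eventually_measure_bowenBall_le {μ : Measure X} {x : X} {α : ℝ}
    (h : (α : EReal) < hloc f μ x) :
    ∃ ε > 0, ∀ᶠ n : ℕ in atTop, μ (bowenBall f n x ε) ≤ ENNReal.ofReal (Real.exp (-α * n)) := by
  rw [hloc_eq_sSup] at h
  obtain ⟨_, ⟨ε, hε, rfl⟩, hlt⟩ := lt_sSup_iff.1 h
  refine ⟨ε, hε, ?_⟩
  filter_upwards [eventually_lt_of_lt_liminf hlt, eventually_ge_atTop 1] with n hn hn1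
  exact le_ofReal_exp_of_lt_inv_mul_neg_log (by exact_mod_cast hn1) hn

def decaySet (f : ℕ → X → X) (μ : Measure X) (Z : Set X) (α : ℝ) (k : ℕ) : Set X :=
  {x ∈ Z | ∀ n ≥ k, μ (bowenBall f n x (1 / (k + 1))) ≤ ENNReal.ofReal (Real.exp (-α * n))}

lemma subset_iUnion_decaySet {μ : Measure X} {Z : Set X} {α : ℝ}
    (h : ∀ x ∈ Z, (α : EReal) < hloc f μ x) : Z ⊆ ⋃ k, decaySet f μ Z α k := by
  intro x hx
  obtain ⟨ε, hε, hev⟩ := exists_eventually_measure_bowenBall_le (h x hx)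
  obtain ⟨N, hN⟩ := eventually_atTop.1 hev
  obtain ⟨k, hk⟩ := exists_nat_one_div_lt hε
  have hrad : 1 / ((max N k : ℕ) + 1 : ℝ) ≤ ε :=
    (one_div_le_one_div_of_le (by positivity) (by gcongr; exact le_max_right N k)).trans hk.le
  exact mem_iUnion.2 ⟨max N k, hx, fun n hn =>
    (measure_mono (bowenBall_mono hrad)).trans (hN n ((le_max_left N k).trans hn))⟩

lemma measure_bowenBall_inter_decaySet_le {μ : Measure X} {Z : Set X} {α : ℝ} {k m : ℕ}
    (hkm : k ≤ m) (c : X) :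
    μ (bowenBall f m c (1 / (k + 1) / 2) ∩ decaySet f μ Z α k)
      ≤ ENNReal.ofReal (Real.exp (-α * m)) := by
  rcases (bowenBall f m c (1 / (k + 1) / 2) ∩ decaySet f μ Z α k).eq_empty_or_nonempty
    with hempty | ⟨y, hyB, hyZ⟩
  · rw [hempty, measure_empty]
    exact zero_le
  calc μ (bowenBall f m c (1 / (k + 1) / 2) ∩ decaySet f μ Z α k)
      ≤ μ (bowenBall f m y (1 / (k + 1))) := by
        refine measure_mono (inter_subset_left.trans ?_)
        simpa only [add_halves] using bowenBall_subset_bowenBall_of_mem hyB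
    _ ≤ _ := hyZ.2 m hkm

lemma le_hWBtop_of_measure_decaySet_pos {μ : Measure X} {Z : Set X} {α : ℝ} {k : ℕ}
    (hk : 0 < μ (decaySet f μ Z α k)) : (α : EReal) ≤ hWBtop f Z := by
  have hmass : ∀ β < α, μ (decaySet f μ Z α k) ≤ Wpre f (fun _ => 0) Z k β (1 / (k + 1) / 2) :=
    fun β hβ => measure_le_Wpre_zero (sep_subset _ _) fun m hm c =>
      (measure_bowenBall_inter_decaySet_le hm c).trans <|
        ENNReal.ofReal_le_ofReal (Real.exp_le_exp.2 (by gcongr))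
  calc (α : EReal) ≤ PWeps f (fun _ => 0) Z (1 / (k + 1) / 2) :=
        le_PWeps_of_measure_le_Wpre hk hmass
    _ ≤ sSup (PWeps f (fun _ => 0) Z '' Ioi 0) :=
        le_sSup ⟨_, show (0 : ℝ) < 1 / (k + 1) / 2 by positivity, rfl⟩
    _ = hWBtop f Z := (limUnder_nhdsGT_zero_eq_sSup (PWeps_zero_antitone Z)).symm

end MassDistribution

variable {X : Type} [MetricSpace X] [MeasurableSpace X]

theorem statement3_general (f : ℕ → X → X) (μ : Measure X) (Z : Set X) (s : ℝ)
    (h : ∀ x ∈ Z, (s : EReal) ≤ hloc f μ x) (hμZ : 0 < μ Z) :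
    (s : EReal) ≤ hBtop f Z ∧ (s : EReal) ≤ hWBtop f Z := by
  have hW : (s : EReal) ≤ hWBtop f Z := by
    refine EReal.ge_of_forall_gt_iff_ge.1 fun α hα => ?_
    have hcover := subset_iUnion_decaySet fun x hx => hα.trans_le (h x hx)
    obtain ⟨k, hk⟩ := exists_measure_pos_of_not_measure_iUnion_null
      (hμZ.trans_le (measure_mono hcover)).ne'
    exact le_hWBtop_of_measure_decaySet_pos hk.bot_lt
  exact ⟨hW.trans (hWBtop_le_hBtop f Z), hW⟩

/-- If `h̲_μ(f_{1,∞},x) ≥ s` for all `x ∈ Z` and `μ(Z) > 0`, then the Bowen and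
weighted Bowen topological entropies of `Z` are at least `s`. -/
theorem statement3 [CompactSpace X] [BorelSpace X]
    (f : ℕ → X → X) (hf : ∀ n, Continuous (f n))
    (μ : Measure X) [IsProbabilityMeasure μ] (Z : Set X) (s : ℝ)
    (h : ∀ x ∈ Z, (s : EReal) ≤ hloc f μ x) (hμZ : 0 < μ Z) :
    (s : EReal) ≤ hBtop f Z ∧ (s : EReal) ≤ hWBtop f Z :=
  statement3_general f μ Z s h hμZ
end

section
/- Let (X,d) be a compact metric space, f_{1,∞} an NDS on X, and r > 0. Let ℬ(r) = { B_n(x,r) : x ∈ X, n ∈ ℕ } be the family of all Bowen balls of radius r. For any subfamily ℱ ⊆ ℬ(r), there exists a (not necessarily countable) subfamily 𝒢 ⊆ ℱ consisting of pairwise disjoint Bowen balls such that ∪_{B∈ℱ} B ⊆ ∪_{B_n(x,r)∈𝒢} B_n(x,3r). -/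
open Filter MeasureTheory Set ENNReal

noncomputable section

variable {X : Type} [MetricSpace X]

variable [MeasurableSpace X]

/-! Apply Vitali's covering lemma to the Bowen balls `B_n(x, r)`, giving `B_n(x, r)` the size
`(1/2)^n`: the selected ball meeting a given ball `B_n(x, r)` then has order at most `n`, and the
triangle inequality for the Bowen metric `d_n` puts `B_n(x, r)` inside its `3r`-enlargement. -/

theorem le_of_pow_le_mul_pow {c τ : ℝ} (hc₀ : 0 < c) (hc₁ : c ≤ 1) (hτ : τ * c < 1) {a b : ℕ}
    (h : c ^ a ≤ τ * c ^ b) : b ≤ a := by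
  by_contra! hab
  have hτ₀ : 0 < τ := pos_of_mul_pos_left ((pow_pos hc₀ a).trans_le h) (pow_pos hc₀ b).le
  have : c ^ a < c ^ a :=
    calc c ^ a ≤ τ * c ^ b := h
      _ ≤ τ * c ^ (a + 1) :=
        mul_le_mul_of_nonneg_left (pow_le_pow_of_le_one hc₀.le hc₁ hab) hτ₀.le
      _ = τ * c * c ^ a := by ring
      _ < c ^ a := mul_lt_of_lt_one_left (pow_pos hc₀ a) hτ
  exact lt_irrefl _ this

section BowenBall

variable {Y : Type} [MetricSpace Y] (f : ℕ → Y → Y)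

theorem mem_bowenBall_self (n : ℕ) (x : Y) {ε : ℝ} (hε : 0 < ε) : x ∈ bowenBall f n x ε :=
  fun j _ => by simpa using hε

theorem bowenBall_subset_of_inter_nonempty {m n : ℕ} (hnm : n ≤ m) {x y : Y} {r s : ℝ}
    (h : (bowenBall f m x s ∩ bowenBall f n y r).Nonempty) :
    bowenBall f m x s ⊆ bowenBall f n y (r + 2 * s) := by
  obtain ⟨z, hzx, hzy⟩ := h
  intro w hw j hj
  have hjm : j < m := hj.trans_le hnm
  calc dist (nIter f j y) (nIter f j w)
      ≤ dist (nIter f j y) (nIter f j z) + dist (nIter f j x) (nIter f j z)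
        + dist (nIter f j x) (nIter f j w) := by
        rw [dist_comm (nIter f j x) (nIter f j z)]; exact dist_triangle4 _ _ _ _
    _ < r + s + s := by gcongr <;> [exact hzy j hj; exact hzx j hjm; exact hw j hjm]
    _ = r + 2 * s := by ring

end BowenBall

theorem statement12_general
    (f : ℕ → X → X)
    (r : ℝ) (hr : 0 < r) (F : Set (ℕ × X)) :
    ∃ G ⊆ F,
      (G.Pairwise fun p q => Disjoint (bowenBall f p.1 p.2 r) (bowenBall f q.1 q.2 r)) ∧
      (⋃ p ∈ F, bowenBall f p.1 p.2 r) ⊆ ⋃ p ∈ G, bowenBall f p.1 p.2 (3 * r) := by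
  obtain ⟨G, hGF, hGdisj, hcov⟩ :=
    Vitali.exists_disjoint_subfamily_covering_enlargement (fun p : ℕ × X => bowenBall f p.1 p.2 r)
      F (fun p => (1 / 2 : ℝ) ^ p.1) (3 / 2) (by norm_num) (fun _ _ => by positivity) 1
      (fun _ _ => pow_le_one₀ (by norm_num) (by norm_num))
      (fun p _ => ⟨p.2, mem_bowenBall_self f p.1 p.2 hr⟩)
  refine ⟨G, hGF, hGdisj, iUnion₂_subset fun p hp => ?_⟩
  obtain ⟨q, hqG, hmeet, hsize⟩ := hcov p hp
  have hqp : q.1 ≤ p.1 := le_of_pow_le_mul_pow (by norm_num) (by norm_num) (by norm_num) hsize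
  calc bowenBall f p.1 p.2 r ⊆ bowenBall f q.1 q.2 (r + 2 * r) :=
        bowenBall_subset_of_inter_nonempty f hqp hmeet
    _ = bowenBall f q.1 q.2 (3 * r) := by ring_nf
    _ ⊆ ⋃ p ∈ G, bowenBall f p.1 p.2 (3 * r) :=
        subset_biUnion_of_mem (u := fun p : ℕ × X => bowenBall f p.1 p.2 (3 * r)) hqG

/-- Covering lemma for Bowen balls: from any family `ℱ` of Bowen balls of
radius `r` (indexed here by their parameters, order `n` and center `x`) one can extract a
pairwise disjoint subfamily `𝒢` whose `3r`-enlargements cover `⋃_{B ∈ ℱ} B`. -/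
theorem statement12 [CompactSpace X]
    (f : ℕ → X → X) (hf : ∀ n, Continuous (f n))
    (r : ℝ) (hr : 0 < r) (F : Set (ℕ × X)) :
    ∃ G ⊆ F,
      (G.Pairwise fun p q => Disjoint (bowenBall f p.1 p.2 r) (bowenBall f q.1 q.2 r)) ∧
      (⋃ p ∈ F, bowenBall f p.1 p.2 r) ⊆ ⋃ p ∈ G, bowenBall f p.1 p.2 (3 * r) :=
  statement12_general f r hr F

end
end
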